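/- arXiv:1906.03639 — 2 statements merged into one kernel-verified Lean document; each statement's English description precedes it below -/
import Mathlib

section
/- Let X, N₁, N₂ be random vectors in ℝ^n with E[N₂ | X + N₁] = 0 a.s., and suppose all relevant moments are finite. Then for any measurable f : ℝ^n → ℝ^n with f(X+N₁) integrable in L², E[‖f(X+N₁) - (X+N₂)‖²] = E[‖f(X+N₁) - X‖²] + E[‖N₂‖²] + 2E[⟨N₂, X⟩]. -/
/-!
Expanding the square, `‖f(Y) - (X + N₂)‖² = ‖f(Y) - X‖² + ‖N₂‖² + 2⟪N₂, X⟫ - 2⟪N₂, f(Y)⟫`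
with `Y = X + N₁`. Since `f(Y)` is `σ(Y)`-measurable, the pull-out property gives
`E[⟪N₂, f(Y)⟫ | Y] = ⟪E[N₂ | Y], f(Y)⟫ = 0`, so the last term has zero expectation.
-/

open MeasureTheory RealInnerProductSpace

section
variable {Ω E : Type*} [NormedAddCommGroup E] {m mΩ : MeasurableSpace Ω} {μ : Measure Ω}

theorem integrable_norm_sub_sq {f g : Ω → E} (hf : AEStronglyMeasurable f μ)
    (hg : AEStronglyMeasurable g μ) (hf2 : Integrable (fun ω => ‖f ω‖ ^ 2) μ)
    (hg2 : Integrable (fun ω => ‖g ω‖ ^ 2) μ) :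
    Integrable (fun ω => ‖f ω - g ω‖ ^ 2) μ :=
  (memLp_two_iff_integrable_sq_norm (hf.sub hg)).1 <|
    ((memLp_two_iff_integrable_sq_norm hf).2 hf2).sub ((memLp_two_iff_integrable_sq_norm hg).2 hg2)

variable [InnerProductSpace ℝ E]

theorem norm_sub_add_sq_real (a b c : E) :
    ‖a - (b + c)‖ ^ 2 = ‖a - b‖ ^ 2 + ‖c‖ ^ 2 + (2 * ⟪c, b⟫ - 2 * ⟪c, a⟫) := by
  rw [← sub_sub, norm_sub_sq_real, inner_sub_left, real_inner_comm a c, real_inner_comm b c]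
  ring

theorem integral_inner_eq_zero_of_condExp_eq_zero [CompleteSpace E] [IsFiniteMeasure μ]
    (hm : m ≤ mΩ) {N Z : Ω → E} (hN : Integrable N μ) (hNm : μ[N | m] =ᵐ[μ] 0)
    (hZ : AEStronglyMeasurable[m] Z μ) (hNZ : Integrable (fun ω => ⟪N ω, Z ω⟫) μ) :
    ∫ ω, ⟪N ω, Z ω⟫ ∂μ = 0 := by
  have hpull : μ[fun ω => ⟪N ω, Z ω⟫ | m] =ᵐ[μ] fun ω => ⟪μ[N | m] ω, Z ω⟫ :=
    condExp_bilin_of_aestronglyMeasurable_right (innerSL ℝ) hZ hNZ hN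
  rw [← integral_condExp hm, integral_congr_ae hpull]
  refine integral_eq_zero_of_ae ?_
  filter_upwards [hNm] with ω hω
  simp [hω]

end

theorem stmt_4 (n : ℕ) {Ω : Type*} [MeasurableSpace Ω]
    (μ : Measure Ω) [IsProbabilityMeasure μ]
    (X N₁ N₂ : Ω → EuclideanSpace ℝ (Fin n))
    (hX : Measurable X) (hN₁ : Measurable N₁) (hN₂ : Measurable N₂)
    (hcond : μ[N₂ | MeasurableSpace.comap (fun ω => X ω + N₁ ω) inferInstance] =ᵐ[μ] 0)
    (hXsq : Integrable (fun ω => ‖X ω‖ ^ 2) μ)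
    (hN₂sq : Integrable (fun ω => ‖N₂ ω‖ ^ 2) μ)
    (hXN₂ : Integrable (fun ω => ⟪N₂ ω, X ω⟫) μ)
    (f : EuclideanSpace ℝ (Fin n) → EuclideanSpace ℝ (Fin n))
    (hf : Measurable f)
    (hfsq : Integrable (fun ω => ‖f (X ω + N₁ ω)‖ ^ 2) μ)
    (hcross : Integrable (fun ω => ⟪N₂ ω, f (X ω + N₁ ω)⟫) μ) :
    ∫ ω, ‖f (X ω + N₁ ω) - (X ω + N₂ ω)‖ ^ 2 ∂μ =
      ∫ ω, ‖f (X ω + N₁ ω) - X ω‖ ^ 2 ∂μ + ∫ ω, ‖N₂ ω‖ ^ 2 ∂μ +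
        2 * ∫ ω, ⟪N₂ ω, X ω⟫ ∂μ := by
  have hY : Measurable fun ω => X ω + N₁ ω := hX.add hN₁
  have hN₂int : Integrable N₂ μ :=
    ((memLp_two_iff_integrable_sq_norm hN₂.aestronglyMeasurable).2 hN₂sq).integrable one_le_two
  have hcross_zero : ∫ ω, ⟪N₂ ω, f (X ω + N₁ ω)⟫ ∂μ = 0 :=
    integral_inner_eq_zero_of_condExp_eq_zero hY.comap_le hN₂int hcond
      (hf.comp (Measurable.of_comap_le le_rfl)).aestronglyMeasurable hcross
  have hfX : Integrable (fun ω => ‖f (X ω + N₁ ω) - X ω‖ ^ 2) μ :=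
    integrable_norm_sub_sq (hf.comp hY).aestronglyMeasurable hX.aestronglyMeasurable hfsq hXsq
  simp_rw [norm_sub_add_sq_real]
  have hlin : Integrable (fun ω => 2 * ⟪N₂ ω, X ω⟫ - 2 * ⟪N₂ ω, f (X ω + N₁ ω)⟫) μ :=
    (hXN₂.const_mul 2).sub (hcross.const_mul 2)
  rw [integral_add (by exact hfX.add hN₂sq) hlin, integral_add hfX hN₂sq,
    integral_sub (hXN₂.const_mul 2) (hcross.const_mul 2), integral_const_mul, integral_const_mul,
    hcross_zero, mul_zero, sub_zero]
end

section
/- Let (X_i, N_{i1}, N_{i2})_{i≥1} be i.i.d. triples of integrable random vectors in ℝ^n with E[N_{12} | X_1 + N_{11}] = 0 a.s. and all needed moments finite. Fix a finite set Θ of measurable functions f : ℝ^n → ℝ^n (each with integrable cross term and square-integrable values). Then almost surely, for sufficiently large N, every minimizer over Θ of the empirical Noise2noise loss f ↦ (1/N)∑_{i=1}^N ‖f(X_i+N_{i1}) - (X_i+N_{i2})‖² is a minimizer of the population Noise2clean risk f ↦ E[‖f(X+N₁)-X‖²], provided the population Noise2clean risk attains a strict minimum at a unique element of Θ. -/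
/-!
Since `E[N₂ | X + N₁] = 0`, the noise `N₂` is orthogonal in `L²` to every `f (X + N₁)`, so the
population Noise2noise risk of `f` is its Noise2clean risk plus a constant independent of `f`, and
`fstar` is also the strict minimizer of the Noise2noise risk over `Θ`. By the strong law of large
numbers, almost surely the empirical Noise2noise losses of the finitely many `f ∈ Θ` converge
simultaneously to their population values, so eventually `fstar` is the only empirical minimizer.
-/

open MeasureTheory ProbabilityTheory Filter RealInnerProductSpace Topology

section InnerProduct

variable {Ω E : Type*} {mΩ : MeasurableSpace Ω} {μ : Measure Ω}
  [NormedAddCommGroup E] [InnerProductSpace ℝ E]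

lemma MeasureTheory.MemLp.integrable_inner {f g : Ω → E} (hf : MemLp f 2 μ) (hg : MemLp g 2 μ) :
    Integrable (fun ω => ⟪f ω, g ω⟫) μ :=
  memLp_one_iff_integrable.1 ((innerSL ℝ).memLp_of_bilin 1 hf hg)

lemma integral_inner_eq_zero_of_condExp_ae_eq_zero [CompleteSpace E] [IsFiniteMeasure μ]
    {m : MeasurableSpace Ω} (hm : m ≤ mΩ) {Z W : Ω → E} (hZm : StronglyMeasurable[m] Z)
    (hZ : MemLp Z 2 μ) (hW : MemLp W 2 μ) (hcond : μ[W | m] =ᵐ[μ] 0) :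
    ∫ ω, ⟪Z ω, W ω⟫ ∂μ = 0 := by
  have hpull := condExp_bilin_of_stronglyMeasurable_left (innerSL ℝ) hZm
    (hZ.integrable_inner hW) (hW.integrable one_le_two)
  rw [← integral_condExp hm, ← integral_zero Ω ℝ]
  refine integral_congr_ae (hpull.trans ?_)
  filter_upwards [hcond] with ω hω
  simp [hω]

lemma integral_norm_sub_add_sq_eq_of_integral_inner_eq_zero [IsFiniteMeasure μ] {Z X W : Ω → E}
    (hZ : MemLp Z 2 μ) (hX : MemLp X 2 μ) (hW : MemLp W 2 μ)
    (horth : ∫ ω, ⟪Z ω, W ω⟫ ∂μ = 0) :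
    ∫ ω, ‖Z ω - (X ω + W ω)‖ ^ 2 ∂μ =
      ∫ ω, ‖Z ω - X ω‖ ^ 2 ∂μ + (∫ ω, ‖W ω‖ ^ 2 ∂μ + 2 * ∫ ω, ⟪X ω, W ω⟫ ∂μ) := by
  have hZX : Integrable (fun ω => ‖Z ω - X ω‖ ^ 2) μ := (hZ.sub hX).integrable_norm_pow two_ne_zero
  have hW2 : Integrable (fun ω => ‖W ω‖ ^ 2) μ := hW.integrable_norm_pow two_ne_zero
  have hXW : Integrable (fun ω => 2 * ⟪X ω, W ω⟫) μ := (hX.integrable_inner hW).const_mul 2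
  have hZW : Integrable (fun ω => 2 * ⟪Z ω, W ω⟫) μ := (hZ.integrable_inner hW).const_mul 2
  have hpt : ∀ ω, ‖Z ω - (X ω + W ω)‖ ^ 2 =
      ‖Z ω - X ω‖ ^ 2 + ‖W ω‖ ^ 2 + 2 * ⟪X ω, W ω⟫ - 2 * ⟪Z ω, W ω⟫ := by
    intro ω
    rw [← sub_sub, norm_sub_sq_real, inner_sub_left]
    ring
  simp_rw [hpt]
  rw [integral_sub ?_ hZW, integral_add ?_ hXW, integral_add hZX hW2, integral_const_mul,
    integral_const_mul, horth]
  · ring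
  · exact hZX.add hW2
  · exact (hZX.add hW2).add hXW

end InnerProduct

lemma ProbabilityTheory.iIndepFun.ae_tendsto_average_comp {Ω α : Type*} {mΩ : MeasurableSpace Ω}
    {μ : Measure Ω} [MeasurableSpace α] {Z : ℕ → Ω → α} (hindep : iIndepFun Z μ)
    (hident : ∀ i, IdentDistrib (Z i) (Z 0) μ μ) {φ : α → ℝ} (hφ : Measurable φ)
    (hint : Integrable (fun ω => φ (Z 0 ω)) μ) :
    ∀ᵐ ω ∂μ, Tendsto (fun N : ℕ => (∑ i ∈ Finset.range N, φ (Z i ω)) / N) atTop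
      (𝓝 (∫ ω, φ (Z 0 ω) ∂μ)) :=
  strong_law_ae_real (fun i => φ ∘ Z i) hint
    (fun _ _ hij => (hindep.indepFun hij).comp hφ hφ) (fun i => (hident i).comp hφ)

lemma Finset.eventually_isMinOn_imp_eq_of_tendsto {ι α β : Type*} [LinearOrder β]
    [TopologicalSpace β] [OrderClosedTopology β] {l : Filter ι} {s : Finset α}
    {F : ι → α → β} {R : α → β} {a : α} (ha : a ∈ s)
    (hF : ∀ g ∈ s, Tendsto (fun N => F N g) l (𝓝 (R g))) (hR : ∀ g ∈ s, g ≠ a → R a < R g) :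
    ∀ᶠ N in l, ∀ g ∈ s, IsMinOn (F N) s g → g = a := by
  have hlt : ∀ᶠ N in l, ∀ g ∈ s, g ≠ a → F N a < F N g := by
    refine s.eventually_all.2 fun g hg => ?_
    rcases eq_or_ne g a with rfl | hne
    · exact .of_forall fun _ h => absurd rfl h
    · exact ((hF a ha).eventually_lt (hF g hg) (hR g hg hne)).mono fun _ h _ => h
  filter_upwards [hlt] with N hN g hg hmin
  by_contra hne
  exact (hN g hg hne).not_ge (hmin ha)

theorem stmt_8_general (n : ℕ) {Ω : Type*} [MeasurableSpace Ω]
    (μ : Measure Ω) [IsProbabilityMeasure μ]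
    (X N₁ N₂ : ℕ → Ω → EuclideanSpace ℝ (Fin n))
    (hmeas : ∀ i, Measurable (fun ω => (X i ω, N₁ i ω, N₂ i ω)))
    (hindep : iIndepFun (fun i ω => (X i ω, N₁ i ω, N₂ i ω)) μ)
    (hident : ∀ i, IdentDistrib (fun ω => (X i ω, N₁ i ω, N₂ i ω))
      (fun ω => (X 0 ω, N₁ 0 ω, N₂ 0 ω)) μ μ)
    (hcond : μ[N₂ 0 | MeasurableSpace.comap (fun ω => X 0 ω + N₁ 0 ω) inferInstance] =ᵐ[μ] 0)
    (hXsq : Integrable (fun ω => ‖X 0 ω‖ ^ 2) μ)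
    (hN₂sq : Integrable (fun ω => ‖N₂ 0 ω‖ ^ 2) μ)
    (Θ : Finset (EuclideanSpace ℝ (Fin n) → EuclideanSpace ℝ (Fin n)))
    (hΘmeas : ∀ f ∈ Θ, Measurable f)
    (hΘsq : ∀ f ∈ Θ, Integrable (fun ω => ‖f (X 0 ω + N₁ 0 ω)‖ ^ 2) μ)
    (fstar : EuclideanSpace ℝ (Fin n) → EuclideanSpace ℝ (Fin n))
    (hfstar : fstar ∈ Θ)
    (hstrict : ∀ g ∈ Θ, g ≠ fstar →
      ∫ ω, ‖fstar (X 0 ω + N₁ 0 ω) - X 0 ω‖ ^ 2 ∂μ <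
        ∫ ω, ‖g (X 0 ω + N₁ 0 ω) - X 0 ω‖ ^ 2 ∂μ) :
    ∀ᵐ ω ∂μ, ∀ᶠ N : ℕ in atTop, ∀ g ∈ Θ,
      (∀ h ∈ Θ,
        (1 / (N : ℝ)) * ∑ i ∈ Finset.range N, ‖g (X i ω + N₁ i ω) - (X i ω + N₂ i ω)‖ ^ 2 ≤
        (1 / (N : ℝ)) * ∑ i ∈ Finset.range N, ‖h (X i ω + N₁ i ω) - (X i ω + N₂ i ω)‖ ^ 2) →
      (∀ h ∈ Θ,
        ∫ ω', ‖g (X 0 ω' + N₁ 0 ω') - X 0 ω'‖ ^ 2 ∂μ ≤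
          ∫ ω', ‖h (X 0 ω' + N₁ 0 ω') - X 0 ω'‖ ^ 2 ∂μ) := by
  have hY : Measurable (fun ω => X 0 ω + N₁ 0 ω) := (hmeas 0).fst.add (hmeas 0).snd.fst
  have hX : MemLp (X 0) 2 μ :=
    (memLp_two_iff_integrable_sq_norm (hmeas 0).fst.aestronglyMeasurable).2 hXsq
  have hN₂ : MemLp (N₂ 0) 2 μ :=
    (memLp_two_iff_integrable_sq_norm (hmeas 0).snd.snd.aestronglyMeasurable).2 hN₂sq
  have hΘ : ∀ f ∈ Θ, MemLp (fun ω => f (X 0 ω + N₁ 0 ω)) 2 μ := fun f hf =>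
    (memLp_two_iff_integrable_sq_norm ((hΘmeas f hf).comp hY).aestronglyMeasurable).2 (hΘsq f hf)
  have hrisk : ∀ f ∈ Θ, ∫ ω, ‖f (X 0 ω + N₁ 0 ω) - (X 0 ω + N₂ 0 ω)‖ ^ 2 ∂μ =
      ∫ ω, ‖f (X 0 ω + N₁ 0 ω) - X 0 ω‖ ^ 2 ∂μ +
        (∫ ω, ‖N₂ 0 ω‖ ^ 2 ∂μ + 2 * ∫ ω, ⟪X 0 ω, N₂ 0 ω⟫ ∂μ) := fun f hf =>
    integral_norm_sub_add_sq_eq_of_integral_inner_eq_zero (hΘ f hf) hX hN₂ <|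
      integral_inner_eq_zero_of_condExp_ae_eq_zero hY.comap_le
        ((hΘmeas f hf).comp (comap_measurable _)).stronglyMeasurable (hΘ f hf) hN₂ hcond
  have hslln : ∀ f ∈ Θ, ∀ᵐ ω ∂μ, Tendsto (fun N : ℕ => (1 / (N : ℝ)) *
      ∑ i ∈ Finset.range N, ‖f (X i ω + N₁ i ω) - (X i ω + N₂ i ω)‖ ^ 2) atTop
      (𝓝 (∫ ω, ‖f (X 0 ω + N₁ 0 ω) - (X 0 ω + N₂ 0 ω)‖ ^ 2 ∂μ)) := by
    intro f hf
    have hφ : Measurable fun p : EuclideanSpace ℝ (Fin n) × EuclideanSpace ℝ (Fin n) ×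
        EuclideanSpace ℝ (Fin n) => ‖f (p.1 + p.2.1) - (p.1 + p.2.2)‖ ^ 2 := by
      have := hΘmeas f hf
      fun_prop
    filter_upwards [hindep.ae_tendsto_average_comp hident hφ
      (((hΘ f hf).sub (hX.add hN₂)).integrable_norm_pow two_ne_zero)] with ω hω
    simpa only [one_div_mul_eq_div] using hω
  filter_upwards [(ae_ball_iff Θ.countable_toSet).2 hslln] with ω hω
  filter_upwards [Θ.eventually_isMinOn_imp_eq_of_tendsto hfstar hω fun g hg hne => by
    simpa only [hrisk g hg, hrisk fstar hfstar, add_lt_add_iff_right] using hstrict g hg hne]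
    with N hN g hg hmin h hh
  obtain rfl := hN g hg (isMinOn_iff.2 hmin)
  rcases eq_or_ne h g with rfl | hne
  · exact le_rfl
  · exact (hstrict h hh hne).le

theorem stmt_8 (n : ℕ) {Ω : Type*} [MeasurableSpace Ω]
    (μ : Measure Ω) [IsProbabilityMeasure μ]
    (X N₁ N₂ : ℕ → Ω → EuclideanSpace ℝ (Fin n))
    (hmeas : ∀ i, Measurable (fun ω => (X i ω, N₁ i ω, N₂ i ω)))
    (hindep : iIndepFun (fun i ω => (X i ω, N₁ i ω, N₂ i ω)) μ)
    (hident : ∀ i, IdentDistrib (fun ω => (X i ω, N₁ i ω, N₂ i ω))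
      (fun ω => (X 0 ω, N₁ 0 ω, N₂ 0 ω)) μ μ)
    (hcond : μ[N₂ 0 | MeasurableSpace.comap (fun ω => X 0 ω + N₁ 0 ω) inferInstance] =ᵐ[μ] 0)
    (hXsq : Integrable (fun ω => ‖X 0 ω‖ ^ 2) μ)
    (hN₂sq : Integrable (fun ω => ‖N₂ 0 ω‖ ^ 2) μ)
    (Θ : Finset (EuclideanSpace ℝ (Fin n) → EuclideanSpace ℝ (Fin n)))
    (hΘmeas : ∀ f ∈ Θ, Measurable f)
    (hΘsq : ∀ f ∈ Θ, Integrable (fun ω => ‖f (X 0 ω + N₁ 0 ω)‖ ^ 2) μ)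
    (hΘcross : ∀ f ∈ Θ, Integrable (fun ω => ⟪N₂ 0 ω, f (X 0 ω + N₁ 0 ω)⟫) μ)
    (hΘn2n : ∀ f ∈ Θ, Integrable (fun ω => ‖f (X 0 ω + N₁ 0 ω) - (X 0 ω + N₂ 0 ω)‖ ^ 2) μ)
    (fstar : EuclideanSpace ℝ (Fin n) → EuclideanSpace ℝ (Fin n))
    (hfstar : fstar ∈ Θ)
    (hstrict : ∀ g ∈ Θ, g ≠ fstar →
      ∫ ω, ‖fstar (X 0 ω + N₁ 0 ω) - X 0 ω‖ ^ 2 ∂μ <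
        ∫ ω, ‖g (X 0 ω + N₁ 0 ω) - X 0 ω‖ ^ 2 ∂μ) :
    ∀ᵐ ω ∂μ, ∀ᶠ N : ℕ in atTop, ∀ g ∈ Θ,
      (∀ h ∈ Θ,
        (1 / (N : ℝ)) * ∑ i ∈ Finset.range N, ‖g (X i ω + N₁ i ω) - (X i ω + N₂ i ω)‖ ^ 2 ≤
        (1 / (N : ℝ)) * ∑ i ∈ Finset.range N, ‖h (X i ω + N₁ i ω) - (X i ω + N₂ i ω)‖ ^ 2) →
      (∀ h ∈ Θ,
        ∫ ω', ‖g (X 0 ω' + N₁ 0 ω') - X 0 ω'‖ ^ 2 ∂μ ≤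
          ∫ ω', ‖h (X 0 ω' + N₁ 0 ω') - X 0 ω'‖ ^ 2 ∂μ) :=
  stmt_8_general n μ X N₁ N₂ hmeas hindep hident hcond hXsq hN₂sq Θ hΘmeas hΘsq fstar hfstar hstrict
end
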